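/- Let (P_n) be strongly invariant for the system (A) and let h, k be growth rates. The pair (A,P) is (h,k)-dichotomic if and only if there exists a sequence of norms 𝒩 = {|||·|||_n : n ∈ ℕ} compatible with (P_n) such that h_m|||A_m^n P_n x|||_m ≤ h_n|||P_n x|||_n and k_m|||B_m^n Q_m x|||_n ≤ k_n|||Q_m x|||_m for all m ≥ n and all x ∈ X. -/

import Mathlib

open ContinuousLinearMap Filter

noncomputable section

variable {X : Type*} [NormedAddCommGroup X] [NormedSpace ℝ X]

/-- The evolution operator `A_m^n` associated to the linear difference system
`x_{n+1} = A_n x_n`: `A_m^n = A_{m-1} ⋯ A_n` for `m > n` and `A_n^n = I`. -/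
def evol (A : ℕ → X →L[ℝ] X) : ℕ → ℕ → X →L[ℝ] X
  | 0, _ => 1
  | m + 1, n => if m + 1 ≤ n then 1 else A m ∘L evol A m n

/-- `P` is a projectors sequence. -/
def ProjSeq (P : ℕ → X →L[ℝ] X) : Prop := ∀ n, P n ∘L P n = P n

/-- The projectors sequence `P` is invariant for the system `(A)`. -/
def InvariantFor (A P : ℕ → X →L[ℝ] X) : Prop := ∀ n, A n ∘L P n = P (n + 1) ∘L A n

/-- The projectors sequence `P` is strongly invariant for the system `(A)`: it is invariant and
the restriction of `A_m^n` to `Ker P_n` is an isomorphism from `Ker P_n` onto `Ker P_m`. -/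
def StronglyInvariantFor (A P : ℕ → X →L[ℝ] X) : Prop :=
  InvariantFor A P ∧ ∀ m n : ℕ, n ≤ m →
    Set.BijOn (evol A m n) (LinearMap.ker (P n : X →ₗ[ℝ] X) : Set X) (LinearMap.ker (P m : X →ₗ[ℝ] X) : Set X)

/-- A growth rate: an increasing sequence with values in `[1, ∞)` tending to `∞`. -/
def IsGrowthRate (h : ℕ → ℝ) : Prop :=
  StrictMono h ∧ (∀ n, 1 ≤ h n) ∧ Tendsto h atTop atTop

/-- The pair `(A, P)` is `(h,k)`-dichotomic. -/
def Dichotomic (A P : ℕ → X →L[ℝ] X) (h k : ℕ → ℝ) : Prop :=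
  ∃ d : ℕ → ℝ, (∀ n, 1 ≤ d n) ∧ Monotone d ∧
    ∀ m n : ℕ, n ≤ m → ∀ x : X,
      h m * ‖evol A m n (P n x)‖ ≤ d n * (h n * ‖P n x‖) ∧
      k m * ‖(1 - P n) x‖ ≤ d m * (k n * ‖evol A m n ((1 - P n) x)‖)

/-- The pair `(A, P)` is uniformly `(h,k)`-dichotomic. -/
def UniformDichotomic (A P : ℕ → X →L[ℝ] X) (h k : ℕ → ℝ) : Prop :=
  ∃ d : ℝ, 1 ≤ d ∧
    ∀ m n : ℕ, n ≤ m → ∀ x : X,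
      h m * ‖evol A m n (P n x)‖ ≤ d * (h n * ‖P n x‖) ∧
      k m * ‖(1 - P n) x‖ ≤ d * (k n * ‖evol A m n ((1 - P n) x)‖)

/-- The pair `(A, P)` has `(h,k)`-growth. -/
def HasGrowth (A P : ℕ → X →L[ℝ] X) (h k : ℕ → ℝ) : Prop :=
  ∃ g : ℕ → ℝ, (∀ n, 1 ≤ g n) ∧ Monotone g ∧
    ∀ m n : ℕ, n ≤ m → ∀ x : X,
      h n * ‖evol A m n (P n x)‖ ≤ g n * (h m * ‖P n x‖) ∧
      k n * ‖(1 - P n) x‖ ≤ g m * (k m * ‖evol A m n ((1 - P n) x)‖)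

/-- `N` is a sequence of norms on `X`. -/
def IsNormSeq (N : ℕ → X → ℝ) : Prop :=
  ∀ n, (∀ x y, N n (x + y) ≤ N n x + N n y) ∧
    (∀ (a : ℝ) (x : X), N n (a • x) = |a| * N n x) ∧
    (∀ x, N n x = 0 ↔ x = 0)

/-- The sequence of norms `N` is compatible with the projectors sequence `P`. -/
def NormsCompatible (N : ℕ → X → ℝ) (P : ℕ → X →L[ℝ] X) : Prop :=
  IsNormSeq N ∧ ∃ c : ℕ → ℝ, (∀ n, 1 ≤ c n) ∧ Monotone c ∧
    ∀ (n : ℕ) (x : X), ‖x‖ ≤ N n x ∧ N n x ≤ c n * (‖P n x‖ + ‖(1 - P n) x‖)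

/-- The defining properties of the skew-evolution operator `B` associated to the pair `(A, P)`:
`A_m^n B_m^n Q_m = Q_m`, `B_m^n A_m^n Q_n = Q_n` and `B_m^n Q_m = Q_n B_m^n Q_m` for `m ≥ n`,
where `Q_n = I - P_n`. -/
def SkewEvol (A P : ℕ → X →L[ℝ] X) (B : ℕ → ℕ → X →L[ℝ] X) : Prop :=
  ∀ m n : ℕ, n ≤ m →
    evol A m n ∘L (B m n ∘L (1 - P m)) = 1 - P m ∧
    B m n ∘L (evol A m n ∘L (1 - P n)) = 1 - P n ∧
    B m n ∘L (1 - P m) = (1 - P n) ∘L (B m n ∘L (1 - P m))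

/-!
For the direct implication take the Lyapunov norms
`|||x|||_n = sup_{m ≥ n} (h_m / h_n) ‖A_m^n P_n x‖ + sup_{j ≤ n} (k_n / k_j) ‖B_n^j Q_n x‖`.
The dichotomy estimates bound both suprema by `d_n ‖P_n x‖` and `d_n ‖Q_n x‖`, which gives
compatibility, while the terms with `m = n` and `j = n` give `‖x‖ ≤ |||x|||_n`. The cocycle
identities `A_l^m A_m^n = A_l^n` and `B_n^j Q_n B_m^n Q_m = B_m^j Q_m` turn each supremum
for the image of a vector into a sub-supremum of the one for the vector itself, which are exactly
the two contraction estimates. Conversely, compatibility lets one pass from `|||·|||` back to `‖·‖`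
at the cost of the factor `c`, which serves as `d`.
-/

open Set

theorem IsGrowthRate.pos {h : ℕ → ℝ} (hh : IsGrowthRate h) (n : ℕ) : 0 < h n :=
  one_pos.trans_le (hh.2.1 n)

section Evol

variable (A : ℕ → X →L[ℝ] X)

theorem evol_self (n : ℕ) : evol A n n = 1 := by
  cases n <;> simp [evol]

theorem evol_succ {m n : ℕ} (hnm : n ≤ m) : evol A (m + 1) n = A m ∘L evol A m n := by
  simp only [evol]
  rw [if_neg (by omega)]

theorem evol_apply_evol {j n m : ℕ} (hjn : j ≤ n) (hnm : n ≤ m) (x : X) :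
    evol A m n (evol A n j x) = evol A m j x := by
  induction m, hnm using Nat.le_induction with
  | base => simp [evol_self]
  | succ m hm ih => simp [evol_succ A hm, evol_succ A (hjn.trans hm), ih]

end Evol

theorem InvariantFor.evol_apply_proj {A P : ℕ → X →L[ℝ] X} (hI : InvariantFor A P) {n m : ℕ}
    (hnm : n ≤ m) (x : X) : evol A m n (P n x) = P m (evol A m n x) := by
  induction m, hnm using Nat.le_induction with
  | base => simp [evol_self]
  | succ m hm ih =>
    simp only [evol_succ A hm, comp_apply, ih]
    exact congr($(hI m) (evol A m n x))

section Projections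

variable {P : ℕ → X →L[ℝ] X}

theorem proj_add_compl (n : ℕ) (x : X) : P n x + (1 - P n) x = x := by
  simp

theorem ProjSeq.proj_proj (hP : ProjSeq P) (n : ℕ) (x : X) : P n (P n x) = P n x :=
  congr($(hP n) x)

theorem ProjSeq.proj_compl (hP : ProjSeq P) (n : ℕ) (x : X) : P n ((1 - P n) x) = 0 := by
  simp [hP.proj_proj]

theorem ProjSeq.compl_proj (hP : ProjSeq P) (n : ℕ) (x : X) : (1 - P n) (P n x) = 0 := by
  simp [hP.proj_proj]

theorem ProjSeq.compl_compl (hP : ProjSeq P) (n : ℕ) (x : X) :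
    (1 - P n) ((1 - P n) x) = (1 - P n) x := by
  simp [hP.proj_proj]

end Projections

namespace SkewEvol

variable {A P : ℕ → X →L[ℝ] X} {B : ℕ → ℕ → X →L[ℝ] X} {m n : ℕ}

theorem evol_apply_skew (hB : SkewEvol A P B) (hnm : n ≤ m) (x : X) :
    evol A m n (B m n ((1 - P m) x)) = (1 - P m) x :=
  congr($((hB m n hnm).1) x)

theorem skew_apply_evol (hB : SkewEvol A P B) (hnm : n ≤ m) (x : X) :
    B m n (evol A m n ((1 - P n) x)) = (1 - P n) x :=
  congr($((hB m n hnm).2.1) x)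

theorem compl_skew (hB : SkewEvol A P B) (hnm : n ≤ m) (x : X) :
    (1 - P n) (B m n ((1 - P m) x)) = B m n ((1 - P m) x) :=
  congr($((hB m n hnm).2.2) x).symm

theorem proj_skew (hB : SkewEvol A P B) (hP : ProjSeq P) (hnm : n ≤ m) (x : X) :
    P n (B m n ((1 - P m) x)) = 0 := by
  rw [← hB.compl_skew hnm, hP.proj_compl]

theorem skew_self (hB : SkewEvol A P B) (n : ℕ) (x : X) : B n n ((1 - P n) x) = (1 - P n) x := by
  simpa [evol_self] using hB.skew_apply_evol le_rfl x

/-- Both sides lie in `Ker P_j` and have the same image `Q_m x` under `A_m^j`, which is injective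
there. -/
theorem skew_skew (hB : SkewEvol A P B) (hP : ProjSeq P) (hSI : StronglyInvariantFor A P) {j : ℕ}
    (hjn : j ≤ n) (hnm : n ≤ m) (x : X) :
    B n j ((1 - P n) (B m n ((1 - P m) x))) = B m j ((1 - P m) x) := by
  have hjm := hjn.trans hnm
  refine (hSI.2 m j hjm).injOn (hB.proj_skew hP hjn _) (hB.proj_skew hP hjm x) ?_
  rw [← evol_apply_evol A hjn hnm, hB.evol_apply_skew hjn, hB.compl_skew hnm,
    hB.evol_apply_skew hnm, hB.evol_apply_skew hjm]

end SkewEvol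

section SupNorm

variable {ι : Type*}

theorem iSup_norm_apply_nonneg (T : ι → X →L[ℝ] X) (x : X) : 0 ≤ ⨆ i, ‖T i x‖ :=
  Real.iSup_nonneg fun _ => norm_nonneg _

theorem iSup_norm_apply_add_le (T : ι → X →L[ℝ] X) {x y : X}
    (hx : BddAbove (range fun i => ‖T i x‖)) (hy : BddAbove (range fun i => ‖T i y‖)) :
    ⨆ i, ‖T i (x + y)‖ ≤ (⨆ i, ‖T i x‖) + ⨆ i, ‖T i y‖ :=
  Real.iSup_le (fun i => (map_add (T i) x y ▸ norm_add_le _ _).trans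
      (add_le_add (le_ciSup hx i) (le_ciSup hy i)))
    (add_nonneg (iSup_norm_apply_nonneg T x) (iSup_norm_apply_nonneg T y))

theorem iSup_norm_apply_smul (T : ι → X →L[ℝ] X) (a : ℝ) (x : X) :
    ⨆ i, ‖T i (a • x)‖ = |a| * ⨆ i, ‖T i x‖ := by
  simp [Real.mul_iSup_of_nonneg (abs_nonneg a), norm_smul]

theorem mul_iSup_le_mul_iSup {f g : ι → ℝ} {a b : ℝ} (ha : 0 ≤ a) (hb : 0 ≤ b)
    (hg : BddAbove (range g)) (hg₀ : ∀ i, 0 ≤ g i) (hfg : ∀ i, a * f i ≤ b * g i) :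
    a * ⨆ i, f i ≤ b * ⨆ i, g i := by
  rw [Real.mul_iSup_of_nonneg ha]
  exact Real.iSup_le (fun i => (hfg i).trans (mul_le_mul_of_nonneg_left (le_ciSup hg i) hb))
    (mul_nonneg hb (Real.iSup_nonneg hg₀))

end SupNorm

theorem isNormSeq_of_norm_le {N : ℕ → X → ℝ} (hadd : ∀ n x y, N n (x + y) ≤ N n x + N n y)
    (hsmul : ∀ n (a : ℝ) x, N n (a • x) = |a| * N n x) (hle : ∀ n x, ‖x‖ ≤ N n x) :
    IsNormSeq N := fun n =>
  ⟨hadd n, hsmul n, fun x =>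
    ⟨fun hx => norm_le_zero_iff.mp (hx ▸ hle n x), fun hx => by simpa [hx] using hsmul n 0 0⟩⟩

section Lyapunov

variable (A P : ℕ → X →L[ℝ] X) (B : ℕ → ℕ → X →L[ℝ] X) (h k : ℕ → ℝ)

/-- The weights vanish outside `m ≥ n` (resp. `j ≤ n`), so that the suprema in `lyapunovNorm`
can range over all of `ℕ`. -/
def weightedEvol (n m : ℕ) : X →L[ℝ] X :=
  if n ≤ m then (h m / h n) • (evol A m n ∘L P n) else 0

def weightedSkewEvol (n j : ℕ) : X →L[ℝ] X :=
  if j ≤ n then (k n / k j) • (B n j ∘L (1 - P n)) else 0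

def lyapunovNorm (n : ℕ) (x : X) : ℝ :=
  (⨆ m, ‖weightedEvol A P h n m x‖) + ⨆ j, ‖weightedSkewEvol P B k n j x‖

variable {A P B h k}

theorem weightedEvol_self (hpos : ∀ n, 0 < h n) (n : ℕ) (x : X) :
    weightedEvol A P h n n x = P n x := by
  simp [weightedEvol, (hpos n).ne', evol_self]

theorem weightedSkewEvol_self (hB : SkewEvol A P B) (kpos : ∀ n, 0 < k n) (n : ℕ) (x : X) :
    weightedSkewEvol P B k n n x = (1 - P n) x := by
  simp only [weightedSkewEvol, le_refl, if_true, comp_apply, div_self (kpos n).ne',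
    one_smul]
  exact hB.skew_self n x

theorem weightedEvol_apply_eq_zero {n : ℕ} {x : X} (hx : P n x = 0) (m : ℕ) :
    weightedEvol A P h n m x = 0 := by
  unfold weightedEvol; split_ifs <;> simp only [smul_apply, comp_apply, hx, map_zero, smul_zero,
    zero_apply]

theorem weightedSkewEvol_apply_eq_zero {n : ℕ} {x : X} (hx : (1 - P n) x = 0) (j : ℕ) :
    weightedSkewEvol P B k n j x = 0 := by
  unfold weightedSkewEvol; split_ifs <;> simp only [smul_apply, comp_apply, hx, map_zero,
    smul_zero, zero_apply]

theorem norm_weightedEvol_apply_le (hpos : ∀ n, 0 < h n) {d : ℝ} (hd : 0 ≤ d) {n : ℕ} {x : X}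
    (hdich : ∀ m, n ≤ m → h m * ‖evol A m n (P n x)‖ ≤ d * (h n * ‖P n x‖)) (m : ℕ) :
    ‖weightedEvol A P h n m x‖ ≤ d * ‖P n x‖ := by
  unfold weightedEvol
  split_ifs with hnm
  · rw [smul_apply, norm_smul, Real.norm_of_nonneg (div_nonneg (hpos m).le (hpos n).le),
      comp_apply, div_mul_eq_mul_div, div_le_iff₀ (hpos n)]
    linarith [hdich m hnm]
  · simpa using mul_nonneg hd (norm_nonneg (P n x))

theorem norm_weightedSkewEvol_apply_le (hB : SkewEvol A P B) (kpos : ∀ n, 0 < k n) {d : ℝ}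
    (hd : 0 ≤ d) {n : ℕ} (x : X)
    (hdich : ∀ j, j ≤ n → ∀ y : X, k n * ‖(1 - P j) y‖ ≤ d * (k j * ‖evol A n j ((1 - P j) y)‖))
    (j : ℕ) : ‖weightedSkewEvol P B k n j x‖ ≤ d * ‖(1 - P n) x‖ := by
  unfold weightedSkewEvol
  split_ifs with hjn
  · have hdj := hdich j hjn (B n j ((1 - P n) x))
    rw [hB.compl_skew hjn, hB.evol_apply_skew hjn] at hdj
    rw [smul_apply, norm_smul, Real.norm_of_nonneg (div_nonneg (kpos n).le (kpos j).le),
      comp_apply, div_mul_eq_mul_div, div_le_iff₀ (kpos j)]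
    linarith
  · simpa using mul_nonneg hd (norm_nonneg ((1 - P n) x))

theorem mul_norm_weightedEvol_evol_le (hP : ProjSeq P) (hI : InvariantFor A P)
    (hpos : ∀ n, 0 < h n) {m n : ℕ} (hnm : n ≤ m) (x : X) (l : ℕ) :
    h m * ‖weightedEvol A P h m l (evol A m n (P n x))‖ ≤ h n * ‖weightedEvol A P h n l (P n x)‖ := by
  unfold weightedEvol
  split_ifs with hml hnl hnl
  · refine le_of_eq ?_
    simp only [smul_apply, comp_apply, norm_smul, ← hI.evol_apply_proj hnm, hP.proj_proj,
      evol_apply_evol A hnm hml, Real.norm_of_nonneg (div_nonneg (hpos l).le (hpos _).le)]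
    field_simp [(hpos m).ne', (hpos n).ne']
  · exact absurd (hnm.trans hml) hnl
  · simpa using mul_nonneg (hpos n).le (norm_nonneg _)
  · simp

theorem mul_norm_weightedSkewEvol_skew_le (hP : ProjSeq P) (hSI : StronglyInvariantFor A P)
    (hB : SkewEvol A P B) (kpos : ∀ n, 0 < k n) {m n : ℕ} (hnm : n ≤ m) (x : X) (j : ℕ) :
    k m * ‖weightedSkewEvol P B k n j (B m n ((1 - P m) x))‖ ≤
      k n * ‖weightedSkewEvol P B k m j ((1 - P m) x)‖ := by
  unfold weightedSkewEvol
  split_ifs with hjn hjm hjm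
  · refine le_of_eq ?_
    simp only [smul_apply, comp_apply, norm_smul, hB.skew_skew hP hSI hjn hnm, hP.compl_compl,
      Real.norm_of_nonneg (div_nonneg (kpos _).le (kpos j).le)]
    field_simp
  · exact absurd (hjn.trans hnm) hjm
  · simpa using mul_nonneg (kpos n).le (norm_nonneg _)
  · simp

theorem Dichotomic.exists_weighted_bounds (hD : Dichotomic A P h k) (hB : SkewEvol A P B)
    (hpos : ∀ n, 0 < h n) (kpos : ∀ n, 0 < k n) :
    ∃ d : ℕ → ℝ, (∀ n, 1 ≤ d n) ∧ Monotone d ∧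
      (∀ n (x : X) m, ‖weightedEvol A P h n m x‖ ≤ d n * ‖P n x‖) ∧
      ∀ n (x : X) j, ‖weightedSkewEvol P B k n j x‖ ≤ d n * ‖(1 - P n) x‖ := by
  obtain ⟨d, hd1, hdm, hdich⟩ := hD
  have hd₀ n : 0 ≤ d n := zero_le_one.trans (hd1 n)
  exact ⟨d, hd1, hdm,
    fun n x => norm_weightedEvol_apply_le hpos (hd₀ n) fun m hnm => (hdich m n hnm x).1,
    fun n x => norm_weightedSkewEvol_apply_le hB kpos (hd₀ n) x fun j hjn y => (hdich n j hjn y).2⟩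

theorem normsCompatible_lyapunovNorm (hB : SkewEvol A P B) (hpos : ∀ n, 0 < h n)
    (kpos : ∀ n, 0 < k n) {d : ℕ → ℝ} (hd1 : ∀ n, 1 ≤ d n) (hdm : Monotone d)
    (hS : ∀ n (x : X) m, ‖weightedEvol A P h n m x‖ ≤ d n * ‖P n x‖)
    (hU : ∀ n (x : X) j, ‖weightedSkewEvol P B k n j x‖ ≤ d n * ‖(1 - P n) x‖) :
    NormsCompatible (lyapunovNorm A P B h k) P := by
  have hSb n x : BddAbove (range fun m => ‖weightedEvol A P h n m x‖) :=
    ⟨_, forall_mem_range.2 (hS n x)⟩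
  have hUb n x : BddAbove (range fun j => ‖weightedSkewEvol P B k n j x‖) :=
    ⟨_, forall_mem_range.2 (hU n x)⟩
  have hle n (x : X) : ‖x‖ ≤ lyapunovNorm A P B h k n x :=
    calc ‖x‖ = ‖P n x + (1 - P n) x‖ := by rw [proj_add_compl]
      _ ≤ ‖P n x‖ + ‖(1 - P n) x‖ := norm_add_le _ _
      _ ≤ lyapunovNorm A P B h k n x := by
        refine add_le_add ?_ ?_
        · simpa only [weightedEvol_self hpos] using le_ciSup (hSb n x) n
        · simpa only [weightedSkewEvol_self hB kpos] using le_ciSup (hUb n x) n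
  refine ⟨isNormSeq_of_norm_le (fun n x y => ?_) (fun n a x => ?_) hle, d, hd1, hdm,
    fun n x => ⟨hle n x, ?_⟩⟩
  · exact (add_le_add (iSup_norm_apply_add_le _ (hSb n x) (hSb n y))
      (iSup_norm_apply_add_le _ (hUb n x) (hUb n y))).trans_eq (add_add_add_comm _ _ _ _)
  · rw [lyapunovNorm, lyapunovNorm, iSup_norm_apply_smul, iSup_norm_apply_smul, mul_add]
  · rw [mul_add]
    have hd₀ : 0 ≤ d n := zero_le_one.trans (hd1 n)
    exact add_le_add (Real.iSup_le (hS n x) (by positivity))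
      (Real.iSup_le (hU n x) (by positivity))

theorem lyapunovNorm_evol_le (hP : ProjSeq P) (hI : InvariantFor A P) (hpos : ∀ n, 0 < h n)
    (hSb : ∀ n (x : X), BddAbove (range fun m => ‖weightedEvol A P h n m x‖)) {m n : ℕ}
    (hnm : n ≤ m) (x : X) :
    h m * lyapunovNorm A P B h k m (evol A m n (P n x)) ≤ h n * lyapunovNorm A P B h k n (P n x) := by
  have hQm : (1 - P m) (evol A m n (P n x)) = 0 := by
    rw [hI.evol_apply_proj hnm, hP.compl_proj]
  simp only [lyapunovNorm, weightedSkewEvol_apply_eq_zero hQm, weightedSkewEvol_apply_eq_zero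
    (hP.compl_proj n x), norm_zero, ciSup_const, add_zero]
  exact mul_iSup_le_mul_iSup (hpos m).le (hpos n).le (hSb n _) (fun _ => norm_nonneg _)
    (mul_norm_weightedEvol_evol_le hP hI hpos hnm x)

theorem lyapunovNorm_skew_le (hP : ProjSeq P) (hSI : StronglyInvariantFor A P)
    (hB : SkewEvol A P B) (kpos : ∀ n, 0 < k n)
    (hUb : ∀ n (x : X), BddAbove (range fun j => ‖weightedSkewEvol P B k n j x‖)) {m n : ℕ}
    (hnm : n ≤ m) (x : X) :
    k m * lyapunovNorm A P B h k n (B m n ((1 - P m) x)) ≤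
      k n * lyapunovNorm A P B h k m ((1 - P m) x) := by
  simp only [lyapunovNorm, weightedEvol_apply_eq_zero (hB.proj_skew hP hnm x), norm_zero,
    ciSup_const, zero_add]
  calc k m * ⨆ j, ‖weightedSkewEvol P B k n j (B m n ((1 - P m) x))‖
      ≤ k n * ⨆ j, ‖weightedSkewEvol P B k m j ((1 - P m) x)‖ :=
        mul_iSup_le_mul_iSup (kpos m).le (kpos n).le (hUb m _) (fun _ => norm_nonneg _)
          (mul_norm_weightedSkewEvol_skew_le hP hSI hB kpos hnm x)
    _ ≤ _ := mul_le_mul_of_nonneg_left (le_add_of_nonneg_left (iSup_norm_apply_nonneg _ _))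
        (kpos n).le

end Lyapunov

theorem NormsCompatible.dichotomic {A P : ℕ → X →L[ℝ] X} {B : ℕ → ℕ → X →L[ℝ] X}
    {h k : ℕ → ℝ} {N : ℕ → X → ℝ} (hN : NormsCompatible N P) (hP : ProjSeq P)
    (hI : InvariantFor A P) (hB : SkewEvol A P B) (hpos : ∀ n, 0 < h n) (kpos : ∀ n, 0 < k n)
    (hcontr : ∀ m n : ℕ, n ≤ m → ∀ x : X,
      h m * N m (evol A m n (P n x)) ≤ h n * N n (P n x) ∧
      k m * N n (B m n ((1 - P m) x)) ≤ k n * N m ((1 - P m) x)) :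
    Dichotomic A P h k := by
  obtain ⟨-, c, hc1, hcm, hc⟩ := hN
  refine ⟨c, hc1, hcm, fun m n hnm x => ⟨?_, ?_⟩⟩
  · calc h m * ‖evol A m n (P n x)‖
        ≤ h m * N m (evol A m n (P n x)) := mul_le_mul_of_nonneg_left (hc m _).1 (hpos m).le
      _ ≤ h n * N n (P n x) := (hcontr m n hnm x).1
      _ ≤ h n * (c n * (‖P n (P n x)‖ + ‖(1 - P n) (P n x)‖)) :=
          mul_le_mul_of_nonneg_left (hc n _).2 (hpos n).le
      _ = c n * (h n * ‖P n x‖) := by rw [hP.proj_proj, hP.compl_proj, norm_zero]; ring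
  · set y := evol A m n ((1 - P n) x)
    have hPy : P m y = 0 := by rw [← hI.evol_apply_proj hnm, hP.proj_compl, map_zero]
    have hQy : (1 - P m) y = y := by simp [hPy]
    have hcontr' := (hcontr m n hnm y).2
    rw [hQy, hB.skew_apply_evol hnm] at hcontr'
    calc k m * ‖(1 - P n) x‖
        ≤ k m * N n ((1 - P n) x) := mul_le_mul_of_nonneg_left (hc n _).1 (kpos m).le
      _ ≤ k n * N m y := hcontr'
      _ ≤ k n * (c m * (‖P m y‖ + ‖(1 - P m) y‖)) :=
          mul_le_mul_of_nonneg_left (hc m _).2 (kpos n).le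
      _ = c m * (k n * ‖y‖) := by rw [hQy, hPy, norm_zero, zero_add]; ring

theorem stmt_5_general (A P : ℕ → X →L[ℝ] X) (B : ℕ → ℕ → X →L[ℝ] X)
    (hP : ProjSeq P) (hSI : StronglyInvariantFor A P) (hB : SkewEvol A P B)
    (h k : ℕ → ℝ) (hh : IsGrowthRate h) (hk : IsGrowthRate k) :
    Dichotomic A P h k ↔
      ∃ N : ℕ → X → ℝ, NormsCompatible N P ∧
        ∀ m n : ℕ, n ≤ m → ∀ x : X,
          h m * N m (evol A m n (P n x)) ≤ h n * N n (P n x) ∧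
          k m * N n (B m n ((1 - P m) x)) ≤ k n * N m ((1 - P m) x) := by
  constructor
  · intro hD
    obtain ⟨d, hd1, hdm, hS, hU⟩ := hD.exists_weighted_bounds hB hh.pos hk.pos
    refine ⟨lyapunovNorm A P B h k,
      normsCompatible_lyapunovNorm hB hh.pos hk.pos hd1 hdm hS hU, fun m n hnm x => ⟨?_, ?_⟩⟩
    · exact lyapunovNorm_evol_le hP hSI.1 hh.pos (fun n x => ⟨_, forall_mem_range.2 (hS n x)⟩)
        hnm x
    · exact lyapunovNorm_skew_le hP hSI hB hk.pos (fun n x => ⟨_, forall_mem_range.2 (hU n x)⟩)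
        hnm x
  · rintro ⟨N, hN, hcontr⟩
    exact hN.dichotomic hP hSI.1 hB hh.pos hk.pos hcontr

theorem stmt_5 [CompleteSpace X] (A P : ℕ → X →L[ℝ] X) (B : ℕ → ℕ → X →L[ℝ] X)
    (hP : ProjSeq P) (hSI : StronglyInvariantFor A P) (hB : SkewEvol A P B)
    (h k : ℕ → ℝ) (hh : IsGrowthRate h) (hk : IsGrowthRate k) :
    Dichotomic A P h k ↔
      ∃ N : ℕ → X → ℝ, NormsCompatible N P ∧
        ∀ m n : ℕ, n ≤ m → ∀ x : X,
          h m * N m (evol A m n (P n x)) ≤ h n * N n (P n x) ∧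
          k m * N n (B m n ((1 - P m) x)) ≤ k n * N m ((1 - P m) x) :=
  stmt_5_general A P B hP hSI hB h k hh hk

end
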